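/- Let F be a binary relation on a set Pri and ⊑_F the relaxed flow preorder on security levels (subsets of Pri). Then: (1) l₁ ∪ l₂ is a greatest lower bound of l₁ and l₂ with respect to ⊑_F; (2) ↑F(l₁) ∩ ↑F(l₂) is a least upper bound of l₁ and l₂ with respect to ⊑_F; (3) ∅ is a greatest element (l ⊑_F ∅ for all l); (4) Pri is a least element (Pri ⊑_F l for all l). -/

import Mathlib

/-!
`l₁ ⊑_F l₂` says exactly `l₂ ⊆ ↑F(l₁)`, and `ℓ ⊆ ↑F(ℓ)`, so every superset of a level is below it.
All four claims reduce to this: a common upper bound `g` of `l₁, l₂` lies in `↑F(l₁) ∩ ↑F(l₂)`,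
hence is above that intersection.
-/

/-- The `F`-upward closure of a security level `ℓ`. -/
def upclo {α : Type*} (F : α → α → Prop) (ℓ : Set α) : Set α :=
  {q | ∃ p ∈ ℓ, Relation.ReflTransGen F p q}

/-- The relaxed flow relation `l₁ ⊑_F l₂`. -/
def flowLe {α : Type*} (F : α → α → Prop) (l₁ l₂ : Set α) : Prop :=
  ∀ q ∈ l₂, ∃ p ∈ l₁, Relation.ReflTransGen F p q

section FlowOrder

variable {α : Type*} {F : α → α → Prop}

theorem flowLe_iff_subset_upclo {l₁ l₂ : Set α} : flowLe F l₁ l₂ ↔ l₂ ⊆ upclo F l₁ :=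
  Iff.rfl

theorem subset_upclo (ℓ : Set α) : ℓ ⊆ upclo F ℓ :=
  fun q hq => ⟨q, hq, Relation.ReflTransGen.refl⟩

theorem flowLe_of_subset {l₁ l₂ : Set α} (h : l₂ ⊆ l₁) : flowLe F l₁ l₂ :=
  flowLe_iff_subset_upclo.2 (h.trans (subset_upclo l₁))

theorem flowLe_union_iff {g l₁ l₂ : Set α} :
    flowLe F g (l₁ ∪ l₂) ↔ flowLe F g l₁ ∧ flowLe F g l₂ := by
  simp only [flowLe_iff_subset_upclo, Set.union_subset_iff]

end FlowOrder

/-- in the preorder `⊑_F`, union of levels is a greatest lower bound,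
intersection of upward closures is a least upper bound, `∅` is a greatest element,
and `Pri` is a least element. -/
theorem stmt_10 {α : Type*} (F : α → α → Prop) :
    (∀ l₁ l₂ : Set α,
      flowLe F (l₁ ∪ l₂) l₁ ∧ flowLe F (l₁ ∪ l₂) l₂ ∧
      (∀ g : Set α, flowLe F g l₁ → flowLe F g l₂ → flowLe F g (l₁ ∪ l₂))) ∧
    (∀ l₁ l₂ : Set α,
      flowLe F l₁ (upclo F l₁ ∩ upclo F l₂) ∧ flowLe F l₂ (upclo F l₁ ∩ upclo F l₂) ∧
      (∀ g : Set α, flowLe F l₁ g → flowLe F l₂ g → flowLe F (upclo F l₁ ∩ upclo F l₂) g)) ∧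
    (∀ l : Set α, flowLe F l ∅) ∧
    (∀ l : Set α, flowLe F Set.univ l) := by
  refine ⟨fun l₁ l₂ => ⟨?_, ?_, ?_⟩, fun l₁ l₂ => ⟨?_, ?_, ?_⟩,
    fun l => flowLe_of_subset (Set.empty_subset l), fun l => flowLe_of_subset (Set.subset_univ l)⟩
  · exact flowLe_of_subset Set.subset_union_left
  · exact flowLe_of_subset Set.subset_union_right
  · exact fun g h₁ h₂ => flowLe_union_iff.2 ⟨h₁, h₂⟩
  · exact flowLe_iff_subset_upclo.2 Set.inter_subset_left
  · exact flowLe_iff_subset_upclo.2 Set.inter_subset_right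
  · intro g h₁ h₂
    exact flowLe_of_subset (Set.subset_inter (flowLe_iff_subset_upclo.1 h₁)
      (flowLe_iff_subset_upclo.1 h₂))
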